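/- arXiv:2102.06595 — 4 statements merged into one kernel-verified Lean document; each statement's English description precedes it below -/
import Mathlib

section
/- For all real g, R, V > 0, the function t ↦ (g t²/2)/(R − √(R² − V² t²)) tends to gR/V² as t tends to 0 from the right (i.e., along the filter 𝓝[>] 0). -/
open Real Filter

/-- For `g, R, V > 0`, the ratio `d(t)/h(t) = (g t²/2) / (R − √(R² − V² t²))`
tends to `gR/V²` as `t → 0⁺`. -/
theorem fall_catchup_ratio_limit (g R V : ℝ) (hg : 0 < g) (hR : 0 < R) (hV : 0 < V) :
    Tendsto (fun t : ℝ => (g * t ^ 2 / 2) / (R - Real.sqrt (R ^ 2 - V ^ 2 * t ^ 2)))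
      (nhdsWithin 0 (Set.Ioi 0)) (nhds (g * R / V ^ 2)) := by
  have hlim : Tendsto (fun t : ℝ => g * (R + Real.sqrt (R ^ 2 - V ^ 2 * t ^ 2)) / (2 * V ^ 2))
      (nhdsWithin 0 (Set.Ioi 0)) (nhds (g * R / V ^ 2)) := by
    have hc : Continuous (fun t : ℝ => g * (R + Real.sqrt (R ^ 2 - V ^ 2 * t ^ 2)) / (2 * V ^ 2)) := by
      continuity
    have h2 := (hc.tendsto 0).mono_left (nhdsWithin_le_nhds (s := Set.Ioi 0))
    convert h2 using 2
    have : (0:ℝ) ≤ R ^ 2 := by positivity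
    rw [show R ^ 2 - V ^ 2 * (0:ℝ) ^ 2 = R ^ 2 by ring, Real.sqrt_sq hR.le]
    field_simp
    ring
  refine hlim.congr' ?_
  filter_upwards [Ioo_mem_nhdsGT_of_mem (Set.left_mem_Ico.2 (by positivity : (0:ℝ) < R / V))]
    with t ht
  obtain ⟨ht0, htR⟩ := ht
  have hlt : V ^ 2 * t ^ 2 < R ^ 2 := by
    have h3 : t * V < R := (lt_div_iff₀ hV).1 htR
    nlinarith [mul_pos hV ht0]
  have hnn : (0:ℝ) ≤ R ^ 2 - V ^ 2 * t ^ 2 := le_of_lt (by linarith)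
  set s := Real.sqrt (R ^ 2 - V ^ 2 * t ^ 2) with hs
  have hs2 : s ^ 2 = R ^ 2 - V ^ 2 * t ^ 2 := Real.sq_sqrt hnn
  have hsnn : 0 ≤ s := Real.sqrt_nonneg _
  have hsltR : s < R := by
    nlinarith [mul_pos hV ht0]
  have hden : R - s ≠ 0 := by linarith
  field_simp
  nlinarith [hs2]
end

section
/- For all real g, R, V > 0 with gR < V², there exists δ with 0 < δ < R/V such that for all t with 0 < t < δ, one has g t²/2 < R − √(R² − V² t²). -/
open Real

/-- If `gR < V²`, then for all sufficiently small positive times `t` the distance fallen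
`g t²/2` is less than `h(t) = R − √(R² − V² t²)`: fast rotation hurls objects off. -/
theorem fall_lags_of_gR_lt_V_sq (g R V : ℝ) (hg : 0 < g) (hR : 0 < R) (hV : 0 < V)
    (h : g * R < V ^ 2) :
    ∃ δ : ℝ, 0 < δ ∧ δ < R / V ∧
      ∀ t : ℝ, 0 < t → t < δ → g * t ^ 2 / 2 < R - Real.sqrt (R ^ 2 - V ^ 2 * t ^ 2) := by
  refine ⟨min (R / (2 * V)) (Real.sqrt (R / g)), ?_, ?_, ?_⟩
  · have : (0:ℝ) < Real.sqrt (R / g) := Real.sqrt_pos.2 (div_pos hR hg)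
    positivity
  · calc min (R / (2 * V)) (Real.sqrt (R / g)) ≤ R / (2 * V) := min_le_left _ _
      _ < R / V := by
        rw [div_lt_div_iff₀ (by positivity) hV]
        nlinarith
  · intro t ht htδ
    have ht2 : t < Real.sqrt (R / g) := lt_of_lt_of_le htδ (min_le_right _ _)
    have hs : (Real.sqrt (R / g)) ^ 2 = R / g := Real.sq_sqrt (le_of_lt (div_pos hR hg))
    have htg : g * t ^ 2 < R := by
      have h1 : t ^ 2 < R / g := by nlinarith [Real.sqrt_nonneg (R / g)]
      calc g * t ^ 2 < g * (R / g) := by nlinarith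
        _ = R := by field_simp
    have hpos : 0 < R - g * t ^ 2 / 2 := by linarith
    have hsq : Real.sqrt (R ^ 2 - V ^ 2 * t ^ 2) < R - g * t ^ 2 / 2 := by
      rw [Real.sqrt_lt' hpos]
      nlinarith [mul_pos (sub_pos.2 h) (pow_pos ht 2), sq_nonneg (g * t ^ 2)]
    linarith
end

section
/- There do not exist real numbers a, b, c such that cosh x = a·x² + b·x + c for all x in the interval [−1, 1]. -/
/-- The catenary is not a parabola: `cosh` does not coincide with any quadratic
polynomial on the interval `[-1, 1]`. -/
theorem cosh_ne_quadratic :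
    ¬ ∃ a b c : ℝ, ∀ x ∈ Set.Icc (-1 : ℝ) 1, Real.cosh x = a * x ^ 2 + b * x + c := by
  rintro ⟨a, b, c, h⟩
  have h0 := h 0 (by norm_num)
  have h1 := h 1 (by norm_num)
  have hm1 := h (-1) (by norm_num)
  have hh := h (1/2) (by norm_num)
  rw [Real.cosh_neg] at hm1
  have hdouble : Real.cosh 1 = 2 * Real.cosh (1/2) ^ 2 - 1 := by
    have h2 := Real.cosh_two_mul (1/2)
    have h3 := Real.cosh_sq (1/2)
    norm_num at h2 ⊢
    linarith [Real.sinh_sq (1/2)]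
  have hgt : 1 < Real.cosh (1/2) := Real.one_lt_cosh.mpr (by norm_num)
  rw [Real.cosh_zero] at h0
  nlinarith [sq_nonneg (Real.cosh (1/2) - 1)]
end

section
/- 18 < 1/sin(π/60) and 1/sin(π/60) < 20; that is, the reciprocal of the sine of 3 degrees lies strictly between 18 and 20. -/
open Real

/-- Aristarchus' bounds: the reciprocal of the sine of 3 degrees (`π/60` radians)
lies strictly between 18 and 20. -/
theorem aristarchus_bounds :
    18 < 1 / Real.sin (π / 60) ∧ 1 / Real.sin (π / 60) < 20 := by
  have hπl := Real.pi_gt_d6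
  have hπu := Real.pi_lt_d6
  have hx : (0:ℝ) < π / 60 := by positivity
  have hs_lt : Real.sin (π / 60) < 1 / 18 := by
    have := Real.sin_lt hx
    nlinarith
  have hs_gt : 1 / 20 < Real.sin (π / 60) := by
    have h := Real.sin_gt_sub_cube hx
    have hcube : (π / 60) ^ 3 < 0.0523599 ^ 3 := by
      exact pow_lt_pow_left₀ (by linarith) (le_of_lt hx) (three_ne_zero)
    nlinarith
  have hs_pos : 0 < Real.sin (π / 60) := by linarith
  constructor
  · rw [lt_div_iff₀ hs_pos]; nlinarith
  · rw [div_lt_iff₀ hs_pos]; nlinarith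
end
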